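/- Let U ⊆ ℝ^m and u an interior point of U. A function f : U → ℝ is strongly differentiable at u if and only if f is strongly partially differentiable at u with respect to each of its m variables. -/

import Mathlib

open Set Metric

/-- `f` is strongly (strictly) differentiable at `u`, an interior point of `s`,
with derivative `A`. -/
def HasStrongDerivAt {m : ℕ} (f : (Fin m → ℝ) → ℝ)
    (A : (Fin m → ℝ) →L[ℝ] ℝ) (s : Set (Fin m → ℝ)) (u : Fin m → ℝ) : Prop :=
  ∀ ε > (0 : ℝ), ∃ δ > (0 : ℝ), ball u δ ⊆ s ∧
    ∀ x ∈ ball u δ, ∀ y ∈ ball u δ, ‖f x - f y - A (x - y)‖ ≤ ε * ‖x - y‖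

/-- `f` is strongly partially differentiable with respect to the `j`-th variable at `u`,
an interior point of `s`, with value `D`. -/
def HasStrongPartialDerivAt {m : ℕ} (f : (Fin m → ℝ) → ℝ) (D : ℝ) (j : Fin m)
    (s : Set (Fin m → ℝ)) (u : Fin m → ℝ) : Prop :=
  ∀ ε > (0 : ℝ), ∃ δ > (0 : ℝ), ball u δ ⊆ s ∧
    ∀ x ∈ ball u δ, ∀ y ∈ ball u δ, x j ≠ y j → (∀ i, i ≠ j → x i = y i) →
      |(f x - f y) / (x j - y j) - D| < ε

/-!
Along a segment parallel to the `j`-th axis, `A (x - y) = (x j - y j) * A eⱼ` and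
`‖x - y‖ = |x j - y j|`, so a strong derivative `A` yields the strong partial derivatives `A eⱼ`.
Conversely, pass from `y` to `x` by changing one coordinate at a time. The intermediate points
stay in the sup-norm ball, so each step changes `f` by `Dⱼ (x j - y j)` up to `ε |x j - y j|`,
and summing gives `|f x - f y - ∑ Dⱼ (x j - y j)| ≤ m ε ‖x - y‖`.
-/

open Function Finset

lemma abs_div_sub_lt_iff {a h D ε : ℝ} (hh : h ≠ 0) :
    |a / h - D| < ε ↔ |a - D * h| < ε * |h| := by
  rw [← div_lt_iff₀ (abs_pos.2 hh), ← abs_div, sub_div, mul_div_cancel_right₀ _ hh]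

lemma sub_eq_single_of_forall_ne_eq {ι R : Type*} [DecidableEq ι] [AddGroup R] {x y : ι → R}
    {j : ι} (h : ∀ i, i ≠ j → x i = y i) : x - y = Pi.single j (x j - y j) := by
  ext i
  rcases eq_or_ne i j with rfl | hij
  · simp
  · simp [hij, h i hij]

lemma Finset.piecewise_mem_ball {ι : Type*} [Fintype ι] {X : ι → Type*}
    [∀ i, PseudoMetricSpace (X i)] (s : Finset ι) [∀ i, Decidable (i ∈ s)]
    {u x y : ∀ i, X i} {r : ℝ} (hx : x ∈ ball u r) (hy : y ∈ ball u r) :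
    s.piecewise x y ∈ ball u r := by
  have hr := pos_of_mem_ball hx
  rw [ball_pi _ hr] at hx hy ⊢
  exact s.piecewise_mem_set_pi hx hy

lemma abs_piecewise_sub_sub_sum_le {ι : Type*} [DecidableEq ι] {f : (ι → ℝ) → ℝ} {D : ι → ℝ}
    {c : ℝ} {t : Set (ι → ℝ)}
    (hf : ∀ j, ∀ p ∈ t, ∀ a, update p j a ∈ t →
      |f (update p j a) - f p - D j * (a - p j)| ≤ c * |a - p j|)
    {x y : ι → ℝ} (ht : ∀ s : Finset ι, s.piecewise x y ∈ t) (s : Finset ι) :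
    |f (s.piecewise x y) - f y - ∑ j ∈ s, D j * (x j - y j)| ≤ c * ∑ j ∈ s, |x j - y j| := by
  induction s using Finset.induction_on with
  | empty => simp
  | insert j s hj ih =>
    have step := hf j _ (ht s) (x j) (by rw [← Finset.piecewise_insert]; exact ht _)
    rw [Finset.piecewise_eq_of_notMem _ _ _ hj] at step
    rw [Finset.piecewise_insert, sum_insert hj, sum_insert hj, mul_add]
    set p := s.piecewise x y
    calc _ = |(f (update p j (x j)) - f p - D j * (x j - y j))
            + (f p - f y - ∑ i ∈ s, D i * (x i - y i))| := by ring_nf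
      _ ≤ _ := (abs_add_le _ _).trans (add_le_add step ih)

section StrongDerivatives

variable {m : ℕ} {f : (Fin m → ℝ) → ℝ} {s : Set (Fin m → ℝ)} {u : Fin m → ℝ}

theorem HasStrongDerivAt.hasStrongPartialDerivAt {A : (Fin m → ℝ) →L[ℝ] ℝ}
    (hA : HasStrongDerivAt f A s u) (j : Fin m) :
    HasStrongPartialDerivAt f (A (Pi.single j 1)) j s u := by
  intro ε hε
  obtain ⟨δ, hδ, hsub, hest⟩ := hA (ε / 2) (half_pos hε)
  refine ⟨δ, hδ, hsub, fun x hx y hy hne hoff => ?_⟩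
  have hxy : x - y = Pi.single j (x j - y j) := sub_eq_single_of_forall_ne_eq hoff
  have hpos : 0 < |x j - y j| := abs_pos.2 (sub_ne_zero.2 hne)
  rw [abs_div_sub_lt_iff (sub_ne_zero.2 hne)]
  have hAj : A (Pi.single j (x j - y j)) = A (Pi.single j 1) * (x j - y j) := by
    rw [mul_comm, ← smul_eq_mul, ← map_smul, ← Pi.single_smul', smul_eq_mul, mul_one]
  calc |f x - f y - A (Pi.single j 1) * (x j - y j)| = ‖f x - f y - A (x - y)‖ := by
        rw [hxy, hAj, Real.norm_eq_abs]
    _ ≤ ε / 2 * ‖x - y‖ := hest x hx y hy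
    _ = ε / 2 * |x j - y j| := by rw [hxy, Pi.norm_single, Real.norm_eq_abs]
    _ < ε * |x j - y j| := by linarith [mul_pos hε hpos]

theorem HasStrongPartialDerivAt.exists_abs_update_sub_le {D : ℝ} {j : Fin m}
    (h : HasStrongPartialDerivAt f D j s u) {ε : ℝ} (hε : 0 < ε) :
    ∃ δ > 0, ∀ p ∈ ball u δ, ∀ a, update p j a ∈ ball u δ →
      |f (update p j a) - f p - D * (a - p j)| ≤ ε * |a - p j| := by
  obtain ⟨δ, hδ, -, hest⟩ := h ε hε
  refine ⟨δ, hδ, fun p hp a hpa => ?_⟩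
  rcases eq_or_ne a (p j) with rfl | hne
  · simp
  have hupd := hest _ hpa p hp (by simpa using hne) fun i hij => update_of_ne hij _ _
  rw [update_self, abs_div_sub_lt_iff (sub_ne_zero.2 hne)] at hupd
  exact hupd.le

theorem hasStrongDerivAt_of_hasStrongPartialDerivAt (hu : u ∈ interior s) {D : Fin m → ℝ}
    (hD : ∀ j, HasStrongPartialDerivAt f (D j) j s u) :
    HasStrongDerivAt f (∑ j, D j • ContinuousLinearMap.proj j) s u := by
  intro ε hε
  -- `m + 1` rather than `m`, so that `c > 0` also when `m = 0`
  set c := ε / (m + 1)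
  have hc : 0 < c := by positivity
  choose δ hδ hest using fun j => (hD j).exists_abs_update_sub_le hc
  obtain ⟨δ₀, hδ₀, hball⟩ := Metric.mem_nhds_iff.1 (mem_interior_iff_mem_nhds.1 hu)
  obtain ⟨r, ⟨hr, hr₀⟩, hrδ⟩ : ∃ r, r ∈ Ioo 0 δ₀ ∧ ∀ j, r ∈ Ioo 0 (δ j) :=
    (Filter.Eventually.and (Ioo_mem_nhdsGT hδ₀)
      (Filter.eventually_all.2 fun j => Ioo_mem_nhdsGT (hδ j))).exists
  refine ⟨r, hr, (ball_subset_ball hr₀.le).trans hball, fun x hx y hy => ?_⟩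
  have hsmall j : ball u r ⊆ ball u (δ j) := ball_subset_ball (hrδ j).2.le
  have key := abs_piecewise_sub_sub_sum_le
    (fun j p hp a hpa => hest j p (hsmall j hp) a (hsmall j hpa))
    (fun s' => s'.piecewise_mem_ball hx hy) univ
  rw [Finset.piecewise_univ] at key
  have hcard : c * m ≤ ε := by
    rw [div_mul_eq_mul_div, div_le_iff₀ (by positivity)]
    nlinarith
  calc ‖f x - f y - (∑ j, D j • ContinuousLinearMap.proj j) (x - y)‖
      = |f x - f y - ∑ j, D j * (x j - y j)| := by simp [Real.norm_eq_abs]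
    _ ≤ c * ∑ j, |x j - y j| := key
    _ ≤ c * (m * ‖x - y‖) := by
        gcongr
        simpa [Real.norm_eq_abs] using Pi.sum_norm_apply_le_norm (x - y)
    _ ≤ ε * ‖x - y‖ := by rw [← mul_assoc]; gcongr

end StrongDerivatives

/-- A real-valued function is strongly differentiable at an interior point `u` if and only
if it is strongly partially differentiable at `u` with respect to each of its variables. -/
theorem strongDeriv_iff_strongPartialDeriv {m : ℕ} (U : Set (Fin m → ℝ)) (u : Fin m → ℝ)
    (hu : u ∈ interior U) (f : (Fin m → ℝ) → ℝ) :
    (∃ A : (Fin m → ℝ) →L[ℝ] ℝ, HasStrongDerivAt f A U u) ↔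
      ∀ j : Fin m, ∃ D : ℝ, HasStrongPartialDerivAt f D j U u := by
  constructor
  · rintro ⟨A, hA⟩ j
    exact ⟨A (Pi.single j 1), hA.hasStrongPartialDerivAt j⟩
  · intro h
    choose D hD using h
    exact ⟨_, hasStrongDerivAt_of_hasStrongPartialDerivAt hu hD⟩
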